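/- Let α ∈ (0,1), c₁ > 0, G_{c₁}(y) = (1/Γ(1-α)) ∫_y^{c₁} (1 - c₁^{-2/α} μ^{2/α})^{-α} dμ for y ∈ [0,c₁]. Then 0 ≤ G_{c₁}(y) ≤ (Γ(1+α/2)/Γ(1-α/2)) c₁ for all y ∈ [0,c₁]. -/
import Mathlib
open Real MeasureTheory intervalIntegral Set Filter Topology

lemma realBeta_conv {a b : ℝ} (ha : 0 < a) (hb : 0 < b) :
    IntervalIntegrable (fun x : ℝ => x ^ (a - 1) * (1 - x) ^ (b - 1)) volume 0 1 := by
  have ha' : 0 < (a : ℂ).re := by simpa using ha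
  have hb' : 0 < (b : ℂ).re := by simpa using hb
  have h := Complex.betaIntegral_convergent ha' hb'
  rw [intervalIntegrable_iff_integrableOn_Ioc_of_le (by norm_num)] at h ⊢
  have h2 : IntegrableOn (fun x : ℝ =>
      ((fun x : ℝ => (x : ℂ) ^ ((a : ℂ) - 1) * (1 - (x:ℂ)) ^ ((b:ℂ) - 1)) x).re) (Ioc 0 1) :=
    h.re
  refine h2.congr_fun (fun x hx => ?_) measurableSet_Ioc
  have hx0 : (0:ℝ) ≤ x := hx.1.le
  have hx1 : (0:ℝ) ≤ 1 - x := by linarith [hx.2]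
  simp only []
  rw [show ((a:ℂ) - 1) = ((a - 1 : ℝ) : ℂ) by push_cast; ring,
      show ((b:ℂ) - 1) = ((b - 1 : ℝ) : ℂ) by push_cast; ring,
      show (1 - (x:ℂ)) = ((1 - x : ℝ) : ℂ) by push_cast; ring,
      ← Complex.ofReal_cpow hx0, ← Complex.ofReal_cpow hx1, ← Complex.ofReal_mul,
      Complex.ofReal_re]

lemma realBeta {a b : ℝ} (ha : 0 < a) (hb : 0 < b) :
    ∫ x in (0:ℝ)..1, x ^ (a - 1) * (1 - x) ^ (b - 1)
      = Real.Gamma a * Real.Gamma b / Real.Gamma (a + b) := by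
  have ha' : 0 < (a : ℂ).re := by simpa using ha
  have hb' : 0 < (b : ℂ).re := by simpa using hb
  have h := Complex.Gamma_mul_Gamma_eq_betaIntegral ha' hb'
  rw [Complex.Gamma_ofReal, Complex.Gamma_ofReal, show (a:ℂ) + b = ((a+b:ℝ):ℂ) by push_cast; ring,
      Complex.Gamma_ofReal] at h
  have hbeta : Complex.betaIntegral a b
      = ((∫ x in (0:ℝ)..1, x ^ (a - 1) * (1 - x) ^ (b - 1) : ℝ) : ℂ) := by
    rw [Complex.betaIntegral, ← intervalIntegral.integral_ofReal]
    refine intervalIntegral.integral_congr (fun x hx => ?_)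
    rw [uIcc_of_le (by norm_num)] at hx
    have hx0 : (0:ℝ) ≤ x := hx.1
    have hx1 : (0:ℝ) ≤ 1 - x := by linarith [hx.2]
    rw [show ((a:ℂ) - 1) = ((a - 1 : ℝ) : ℂ) by push_cast; ring,
        show ((b:ℂ) - 1) = ((b - 1 : ℝ) : ℂ) by push_cast; ring,
        show (1 - (x:ℂ)) = ((1 - x : ℝ) : ℂ) by push_cast; ring,
        ← Complex.ofReal_cpow hx0, ← Complex.ofReal_cpow hx1, ← Complex.ofReal_mul]
  rw [hbeta] at h
  have hG : Real.Gamma (a + b) ≠ 0 := (Real.Gamma_pos_of_pos (by linarith)).ne'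
  field_simp
  have := h.symm
  rw [mul_comm] at this
  exact_mod_cast this

/-- `G_{c₁}(y) = (1/Γ(1-α)) ∫_y^{c₁} (1 - c₁^{-2/α} μ^{2/α})^{-α} dμ`. -/
noncomputable def Gker (α c₁ y : ℝ) : ℝ :=
  (1 / Real.Gamma (1 - α)) * ∫ μ in y..c₁, (1 - c₁ ^ (-(2/α)) * μ ^ (2/α)) ^ (-α)

/-- `0 ≤ G_{c₁}(y) ≤ (Γ(1+α/2)/Γ(1-α/2)) c₁` for all `y ∈ [0,c₁]`. -/
theorem stmt6 (α c₁ : ℝ) (hα0 : 0 < α) (hα1 : α < 1) (hc₁ : 0 < c₁) :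
    ∀ y ∈ Set.Icc (0:ℝ) c₁,
      0 ≤ Gker α c₁ y ∧
      Gker α c₁ y ≤ Real.Gamma (1 + α/2) / Real.Gamma (1 - α/2) * c₁ := by
  set f : ℝ → ℝ := fun μ => (1 - c₁ ^ (-(2/α)) * μ ^ (2/α)) ^ (-α) with hfdef
  have h2α : 0 < 2/α := by positivity
  have hα2 : 0 < α/2 := by positivity
  have h1α : (0:ℝ) < 1 - α := by linarith
  have hΓpos : 0 < Real.Gamma (1 - α) := Real.Gamma_pos_of_pos h1α
  have hΓ2pos : 0 < Real.Gamma (1 - α/2) := Real.Gamma_pos_of_pos (by linarith)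
  -- nonnegativity of `f` on `[0, c₁]`
  have hfnn : ∀ μ ∈ Icc (0:ℝ) c₁, 0 ≤ f μ := by
    intro μ hμ
    apply Real.rpow_nonneg
    have h1 : μ ^ (2/α) ≤ c₁ ^ (2/α) := Real.rpow_le_rpow hμ.1 hμ.2 h2α.le
    have h2 : (0:ℝ) < c₁ ^ (2/α) := Real.rpow_pos_of_pos hc₁ _
    rw [Real.rpow_neg hc₁.le]
    have h3 : (c₁ ^ (2/α))⁻¹ * μ ^ (2/α) ≤ (c₁ ^ (2/α))⁻¹ * c₁ ^ (2/α) :=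
      mul_le_mul_of_nonneg_left h1 (by positivity)
    rw [inv_mul_cancel₀ h2.ne'] at h3
    linarith
  -- change of variables data
  set g : ℝ → ℝ := fun w => c₁ * w ^ (α/2) with hgdef
  set g' : ℝ → ℝ := fun w => c₁ * ((α/2) * w ^ (α/2 - 1)) with hg'def
  have hderiv : ∀ w ∈ Ioo (0:ℝ) 1, HasDerivWithinAt g (g' w) (Ioo 0 1) w := fun w hw =>
    ((Real.hasDerivAt_rpow_const (Or.inl hw.1.ne')).const_mul c₁).hasDerivWithinAt
  have hmono : StrictMonoOn g (Ioo (0:ℝ) 1) := fun x hx y _ hxy =>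
    mul_lt_mul_of_pos_left (Real.rpow_lt_rpow hx.1.le hxy hα2) hc₁
  have hinj : InjOn g (Ioo (0:ℝ) 1) := hmono.injOn
  have himg : g '' Ioo (0:ℝ) 1 = Ioo 0 c₁ := by
    ext x
    constructor
    · rintro ⟨w, hw, rfl⟩
      refine ⟨mul_pos hc₁ (Real.rpow_pos_of_pos hw.1 _), ?_⟩
      have h1 : w ^ (α/2) < 1 := Real.rpow_lt_one hw.1.le hw.2 hα2
      calc c₁ * w ^ (α/2) < c₁ * 1 := mul_lt_mul_of_pos_left h1 hc₁
      _ = c₁ := mul_one c₁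
    · rintro ⟨hx0, hxc⟩
      refine ⟨(x / c₁) ^ (2/α), ⟨Real.rpow_pos_of_pos (by positivity) _,
        Real.rpow_lt_one (by positivity) (by rw [div_lt_one hc₁]; exact hxc) h2α⟩, ?_⟩
      show c₁ * ((x / c₁) ^ (2/α)) ^ (α/2) = x
      rw [← Real.rpow_mul (by positivity), show (2/α)*(α/2) = 1 by field_simp,
        Real.rpow_one, mul_comm, div_mul_cancel₀ x hc₁.ne']
  -- `f ∘ g` on `(0,1)`
  have hw_int : ∀ w ∈ Ioo (0:ℝ) 1,
      |g' w| • f (g w) = (c₁ * (α/2)) * (w ^ (α/2 - 1) * (1 - w) ^ (-α)) := by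
    intro w hw
    have hfg : f (g w) = (1 - w) ^ (-α) := by
      have hkey : c₁ ^ (-(2/α)) * (c₁ * w ^ (α/2)) ^ (2/α) = w := by
        rw [Real.mul_rpow hc₁.le (Real.rpow_nonneg hw.1.le _), ← Real.rpow_mul hw.1.le,
          show (α/2)*(2/α) = 1 by field_simp, Real.rpow_one, Real.rpow_neg hc₁.le,
          ← mul_assoc, inv_mul_cancel₀ (Real.rpow_pos_of_pos hc₁ _).ne', one_mul]
      show (1 - c₁ ^ (-(2/α)) * (c₁ * w ^ (α/2)) ^ (2/α)) ^ (-α) = (1 - w) ^ (-α)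
      rw [hkey]
    have hg'nn : 0 ≤ g' w :=
      mul_nonneg hc₁.le (mul_nonneg hα2.le (Real.rpow_nonneg hw.1.le _))
    rw [smul_eq_mul, hfg, abs_of_nonneg hg'nn]
    show c₁ * ((α/2) * w ^ (α/2 - 1)) * (1 - w) ^ (-α) = _
    ring
  -- beta integral facts for `a = α/2`, `b = 1 - α`
  have hBconv := realBeta_conv hα2 h1α
  have hBval := realBeta hα2 h1α
  simp only [show (1:ℝ) - α - 1 = -α by ring] at hBconv hBval
  -- integrability of f on (0, c₁)
  have hIoo : IntegrableOn (fun w : ℝ =>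
      (c₁ * (α/2)) * (w ^ (α/2 - 1) * (1 - w) ^ (-α))) (Ioo (0:ℝ) 1) := by
    have := (intervalIntegrable_iff_integrableOn_Ioo_of_le (by norm_num : (0:ℝ) ≤ 1)).mp hBconv
    exact this.const_mul _
  have hIf : IntegrableOn f (Ioo 0 c₁) := by
    rw [← himg, integrableOn_image_iff_integrableOn_abs_deriv_smul measurableSet_Ioo hderiv hinj]
    exact hIoo.congr_fun (fun w hw => (hw_int w hw).symm) measurableSet_Ioo
  have hIntc : IntervalIntegrable f volume 0 c₁ :=
    (intervalIntegrable_iff_integrableOn_Ioo_of_le hc₁.le).mpr hIf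
  -- value of the full integral
  have hval : ∫ μ in (0:ℝ)..c₁, f μ
      = Real.Gamma (1 - α) * (Real.Gamma (1 + α/2) / Real.Gamma (1 - α/2)) * c₁ := by
    rw [intervalIntegral.integral_of_le hc₁.le, MeasureTheory.integral_Ioc_eq_integral_Ioo,
      ← himg, integral_image_eq_integral_abs_deriv_smul measurableSet_Ioo hderiv hinj,
      MeasureTheory.setIntegral_congr_fun measurableSet_Ioo hw_int,
      MeasureTheory.integral_const_mul]
    have : ∫ w in Ioo (0:ℝ) 1, w ^ (α/2 - 1) * (1 - w) ^ (-α)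
        = Real.Gamma (α/2) * Real.Gamma (1 - α) / Real.Gamma (α/2 + (1 - α)) := by
      rw [← MeasureTheory.integral_Ioc_eq_integral_Ioo,
        ← intervalIntegral.integral_of_le (by norm_num : (0:ℝ) ≤ 1), hBval]
    rw [this, show α/2 + (1 - α) = 1 - α/2 by ring]
    have hΓa : Real.Gamma (1 + α/2) = (α/2) * Real.Gamma (α/2) := by
      rw [show (1:ℝ) + α/2 = α/2 + 1 by ring, Real.Gamma_add_one hα2.ne']
    rw [hΓa]
    field_simp
  -- assemble
  intro y hy
  obtain ⟨hy0, hyc⟩ := hy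
  have hIy : IntervalIntegrable f volume 0 y :=
    hIntc.mono_set (by rw [uIcc_of_le hy0, uIcc_of_le hc₁.le]; exact Icc_subset_Icc le_rfl hyc)
  have hIyc : IntervalIntegrable f volume y c₁ :=
    hIntc.mono_set (by rw [uIcc_of_le hyc, uIcc_of_le hc₁.le]; exact Icc_subset_Icc hy0 le_rfl)
  have hsplit : (∫ μ in (0:ℝ)..y, f μ) + (∫ μ in y..c₁, f μ) = ∫ μ in (0:ℝ)..c₁, f μ :=
    intervalIntegral.integral_add_adjacent_intervals hIy hIyc
  have h0y : 0 ≤ ∫ μ in (0:ℝ)..y, f μ :=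
    intervalIntegral.integral_nonneg hy0 (fun u hu => hfnn u ⟨hu.1, hu.2.trans hyc⟩)
  have hGker : Gker α c₁ y = (1 / Real.Gamma (1 - α)) * ∫ μ in y..c₁, f μ := rfl
  constructor
  · rw [hGker]
    exact mul_nonneg (by positivity)
      (intervalIntegral.integral_nonneg hyc (fun u hu => hfnn u ⟨hy0.trans hu.1, hu.2⟩))
  · rw [hGker]
    have hle : (∫ μ in y..c₁, f μ) ≤ ∫ μ in (0:ℝ)..c₁, f μ := by linarith
    calc (1 / Real.Gamma (1 - α)) * ∫ μ in y..c₁, f μ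
        ≤ (1 / Real.Gamma (1 - α)) * ∫ μ in (0:ℝ)..c₁, f μ :=
          mul_le_mul_of_nonneg_left hle (by positivity)
      _ = Real.Gamma (1 + α/2) / Real.Gamma (1 - α/2) * c₁ := by
          rw [hval, show Real.Gamma (1 - α) * (Real.Gamma (1 + α/2) / Real.Gamma (1 - α/2)) * c₁
            = Real.Gamma (1 - α) * (Real.Gamma (1 + α/2) / Real.Gamma (1 - α/2) * c₁) from by ring,
            one_div, inv_mul_cancel_left₀ hΓpos.ne']
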